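/- Let n > α > 0 and let u be a positive continuous function on the punctured closed unit ball of ℝⁿ satisfying u(x) ≥ (λ/|x|)^{n-α} u(λ²x/|x|²) for all 0 < λ < 1 and all x with λ² ≤ |x| ≤ λ. Then u(x) ≥ C₀ (2|x|)^{-(n-α)/2} for all 0 < |x| ≤ 1/2, where C₀ = min_{|z|=1/2} u(z) > 0. -/

import Mathlib

/-!
For `0 < |x| ≤ 1/2` take `λ = √(|x|/2)`: then `λ² ≤ |x| ≤ λ < 1`, and the inversion
`λ² x / |x|²` lands on the sphere of radius `1/2`, where `u ≥ C₀`. The scaling factor is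
`(λ / |x|)^(n-α) = (2|x|)^(-(n-α)/2)`.
-/

open Real

lemma norm_sq_div_norm_sq_smul {E : Type*} [NormedAddCommGroup E] [NormedSpace ℝ E]
    (t : ℝ) {x : E} (hx : x ≠ 0) : ‖(t ^ 2 / ‖x‖ ^ 2) • x‖ = t ^ 2 / ‖x‖ := by
  have hx' : 0 < ‖x‖ := norm_pos_iff.mpr hx
  rw [norm_smul, Real.norm_eq_abs, abs_of_nonneg (by positivity)]
  field_simp

lemma sqrt_half_div_rpow {r : ℝ} (hr : 0 < r) (p : ℝ) :
    (√(r / 2) / r) ^ p = (2 * r) ^ (-p / 2) := by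
  have hbase : √(r / 2) / r = ((2 * r) ^ (1 / 2 : ℝ))⁻¹ := by
    rw [← sqrt_eq_rpow, div_eq_iff hr.ne', eq_comm, inv_mul_eq_div, div_eq_iff (by positivity),
      ← sqrt_mul (by positivity), show r / 2 * (2 * r) = r ^ 2 by ring, sqrt_sq hr.le]
  rw [hbase, ← rpow_neg (by positivity), ← rpow_mul (by positivity)]
  ring_nf

theorem le_of_inversion_ineq {E : Type*} [NormedAddCommGroup E] [NormedSpace ℝ E]
    (u : E → ℝ) (p C : ℝ)
    (hscal : ∀ lam : ℝ, 0 < lam → lam < 1 → ∀ x : E, lam ^ 2 ≤ ‖x‖ → ‖x‖ ≤ lam →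
      (lam / ‖x‖) ^ p * u ((lam ^ 2 / ‖x‖ ^ 2) • x) ≤ u x)
    (hC : ∀ z : E, ‖z‖ = 1 / 2 → C ≤ u z) {x : E} (hx : 0 < ‖x‖) (hx2 : ‖x‖ ≤ 1 / 2) :
    C * (2 * ‖x‖) ^ (-p / 2) ≤ u x := by
  set r := ‖x‖
  set lam := √(r / 2)
  have hlam_sq : lam ^ 2 = r / 2 := sq_sqrt (by positivity)
  have hlam_pos : 0 < lam := sqrt_pos.mpr (by positivity)
  have hlam_lt_one : lam < 1 := (sqrt_lt' one_pos).mpr (by linarith)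
  have hr_le_lam : r ≤ lam := (le_sqrt' hx).mpr (by nlinarith)
  have hinv : ‖(lam ^ 2 / r ^ 2) • x‖ = 1 / 2 := by
    rw [norm_sq_div_norm_sq_smul lam (norm_pos_iff.mp hx), hlam_sq]
    change r / 2 / r = 1 / 2
    field_simp
  calc C * (2 * r) ^ (-p / 2) = (lam / r) ^ p * C := by rw [sqrt_half_div_rpow hx]; ring
    _ ≤ (lam / r) ^ p * u ((lam ^ 2 / r ^ 2) • x) := by gcongr; exact hC _ hinv
    _ ≤ u x := hscal lam hlam_pos hlam_lt_one x (by linarith) hr_le_lam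

theorem stmt_6_general (n : ℕ) (α : ℝ)
    (u : EuclideanSpace ℝ (Fin n) → ℝ)
    (hscal : ∀ lam : ℝ, 0 < lam → lam < 1 →
      ∀ x : EuclideanSpace ℝ (Fin n), lam ^ 2 ≤ ‖x‖ → ‖x‖ ≤ lam →
        (lam / ‖x‖) ^ ((n : ℝ) - α) * u ((lam ^ 2 / ‖x‖ ^ 2) • x) ≤ u x)
    (C₀ : ℝ)
    (hC₀le : ∀ z : EuclideanSpace ℝ (Fin n), ‖z‖ = 1 / 2 → C₀ ≤ u z) :
    ∀ x : EuclideanSpace ℝ (Fin n), 0 < ‖x‖ → ‖x‖ ≤ 1 / 2 →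
      C₀ * (2 * ‖x‖) ^ (-((n : ℝ) - α) / 2) ≤ u x :=
  fun _ hx hx2 => le_of_inversion_ineq u _ C₀ hscal hC₀le hx hx2

theorem stmt_6 (n : ℕ) (α : ℝ) (hα : 0 < α) (hαn : α < n)
    (u : EuclideanSpace ℝ (Fin n) → ℝ)
    (hcont : ContinuousOn u {x : EuclideanSpace ℝ (Fin n) | 0 < ‖x‖ ∧ ‖x‖ ≤ 1})
    (hpos : ∀ x : EuclideanSpace ℝ (Fin n), 0 < ‖x‖ → ‖x‖ ≤ 1 → 0 < u x)
    (hscal : ∀ lam : ℝ, 0 < lam → lam < 1 →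
      ∀ x : EuclideanSpace ℝ (Fin n), lam ^ 2 ≤ ‖x‖ → ‖x‖ ≤ lam →
        (lam / ‖x‖) ^ ((n : ℝ) - α) * u ((lam ^ 2 / ‖x‖ ^ 2) • x) ≤ u x)
    (C₀ : ℝ) (hC₀ : 0 < C₀)
    (hC₀le : ∀ z : EuclideanSpace ℝ (Fin n), ‖z‖ = 1 / 2 → C₀ ≤ u z) :
    ∀ x : EuclideanSpace ℝ (Fin n), 0 < ‖x‖ → ‖x‖ ≤ 1 / 2 →
      C₀ * (2 * ‖x‖) ^ (-((n : ℝ) - α) / 2) ≤ u x :=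
  stmt_6_general n α u hscal C₀ hC₀le
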